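/- arXiv:1407.2036 — 5 statements merged into one kernel-verified Lean document; each statement's English description precedes it below -/
import Mathlib

section
/- Let T be a clique tree of a finite simple graph G, rooted at a node C_r. Then the family {f(C) : C a node of T} is a partition of V_G into nonempty sets; in particular, for every vertex x of G there is exactly one node C of T with x ∈ f(C). -/
variable {V : Type*}

/-- The closed neighborhood `N[x]` of a vertex. -/
def closedNbhd (G : SimpleGraph V) (x : V) : Set V := insert x (G.neighborSet x)

/-- `N[S] = ⋃ x ∈ S, N[x]`. -/
def closedNbhdSet (G : SimpleGraph V) (S : Set V) : Set V := ⋃ x ∈ S, closedNbhd G x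

/-- `D` is a dominating set: `N[D] = V`. -/
def IsDomSet (G : SimpleGraph V) (D : Set V) : Prop := closedNbhdSet G D = Set.univ

/-- Minimal dominating set: dominating, and no proper subset dominates. -/
def IsMinDomSet (G : SimpleGraph V) (D : Set V) : Prop :=
  IsDomSet G D ∧ ∀ D' : Set V, D' ⊂ D → ¬ IsDomSet G D'

/-- Private neighbors of `x` with respect to `D`: `P(D,x) = {y : N[y] ∩ D = {x}}`. -/
def privNbrs (G : SimpleGraph V) (D : Set V) (x : V) : Set V :=
  {y | closedNbhd G y ∩ D = {x}}

/-- Irredundant set: every member has a private neighbor. -/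
def IsIrredundant (G : SimpleGraph V) (D : Set V) : Prop :=
  ∀ x ∈ D, (privNbrs G D x).Nonempty

/-- Maximal clique. -/
def IsMaxClique (G : SimpleGraph V) (C : Set V) : Prop :=
  G.IsClique C ∧ ∀ D : Set V, G.IsClique D → C ⊆ D → C = D

/-- The type of maximal cliques of `G`. -/
abbrev MaxClique (G : SimpleGraph V) := {C : Set V // IsMaxClique G C}

/-- A clique tree of `G`, rooted at `root`: a rooted tree whose nodes are exactly the
maximal cliques of `G` (encoded by a parent function from which every node reaches the
root), such that for each vertex `x` the nodes containing `x` induce a connected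
subtree of the tree. -/
structure CliqueTree (G : SimpleGraph V) where
  parent : MaxClique G → MaxClique G
  root : MaxClique G
  parent_root : parent root = root
  reaches_root : ∀ C : MaxClique G, ∃ n : ℕ, parent^[n] C = root
  vertex_subtree : ∀ x : V,
    ((SimpleGraph.fromRel fun C C' : MaxClique G => parent C = C').induce
      {C : MaxClique G | x ∈ C.1}).Connected

variable {G : SimpleGraph V}

open Classical in
/-- `f(C) := C ∖ Pa(C)` for non-root `C`, and `f(C_r) := C_r`. -/
noncomputable def fC (T : CliqueTree G) (C : MaxClique G) : Set V :=
  if C = T.root then C.1 else C.1 \ (T.parent C).1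

/-- `IsAnc T A B` : `A` is an ancestor of `B` (i.e. `B ⪯ A`), namely `A` lies on the
path from the root to `B`. -/
def IsAnc (T : CliqueTree G) (A B : MaxClique G) : Prop :=
  ∃ n : ℕ, T.parent^[n] B = A

/-- `V(C) := ⋃_{C' ⪯ C} f(C')`. -/
noncomputable def Vsub (T : CliqueTree G) (C : MaxClique G) : Set V :=
  ⋃ C' ∈ {C' : MaxClique G | IsAnc T C C'}, fC T C'


/-!
Call a node `A` containing `x` *top for `x`* if `A` is the root or its parent misses `x`;
this is exactly `x ∈ f(A)`. Starting from any maximal clique containing `x` and walking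
towards the root until `x` disappears produces a top node, so the `f(C)` cover `V`. A top
node for `x` is an ancestor of every node containing `x`: the nodes containing `x` form a
connected subtree, and along an edge of that subtree one can only leave the set of
descendants of `A` by stepping from `A` to its parent, which misses `x`. Two top nodes are
therefore ancestors of each other, hence equal, so the `f(C)` are disjoint. Finally
`f(C)` is nonempty: otherwise `C ⊆ Pa(C)`, so `C = Pa(C)` by maximality, which only
happens at the root, and `f(C_r) = C_r` is a nonempty maximal clique.
-/

open Function

theorem SimpleGraph.Reachable.mem_of_adj_mem {W : Type*} {H : SimpleGraph W} {s : Set W}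
    (hs : ∀ u v, H.Adj u v → u ∈ s → v ∈ s) {u v : W} (huv : H.Reachable u v) (hu : u ∈ s) :
    v ∈ s := by
  obtain ⟨p⟩ := huv
  induction p with
  | nil => exact hu
  | cons hadj _ ih => exact ih (hs _ _ hadj hu)

theorem SimpleGraph.exists_maxClique_mem (G : SimpleGraph V) (x : V) :
    ∃ C : MaxClique G, x ∈ C.1 := by
  obtain ⟨C, hxC, hmax⟩ := zorn_subset_nonempty {s | G.IsClique s}
    (fun c hc hchain _ => ⟨⋃₀ c, (G.isClique_sUnion hchain.directedOn).2 hc,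
      fun _ => Set.subset_sUnion_of_mem⟩)
    {x} (G.isClique_singleton x)
  exact ⟨⟨C, hmax.prop, fun D hD hCD => hCD.antisymm (hmax.2 hD hCD)⟩, hxC rfl⟩

theorem MaxClique.nonempty [Nonempty V] (C : MaxClique G) : C.1.Nonempty := by
  obtain ⟨x⟩ := ‹Nonempty V›
  by_contra hC
  rw [Set.not_nonempty_iff_eq_empty] at hC
  have := C.2.2 {x} (G.isClique_singleton x) (hC ▸ Set.empty_subset _)
  exact Set.singleton_ne_empty x (this.symm.trans hC)

theorem mem_fC_iff {T : CliqueTree G} {C : MaxClique G} {x : V} :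
    x ∈ fC T C ↔ x ∈ C.1 ∧ (C = T.root ∨ x ∉ (T.parent C).1) := by
  unfold fC
  split_ifs with h <;> simp [h]

namespace CliqueTree

variable (T : CliqueTree G)

theorem iterate_parent_root (n : ℕ) : T.parent^[n] T.root = T.root :=
  iterate_fixed T.parent_root n

theorem eq_root_of_parent_eq {C : MaxClique G} (h : T.parent C = C) : C = T.root := by
  obtain ⟨n, hn⟩ := T.reaches_root C
  rwa [iterate_fixed h] at hn

variable {T}

theorem isAnc_antisymm {A B : MaxClique G} (hAB : IsAnc T A B) (hBA : IsAnc T B A) :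
    A = B := by
  obtain ⟨n, rfl⟩ := hAB
  obtain ⟨m, hm⟩ := hBA
  rcases Nat.eq_zero_or_pos n with rfl | hn
  · rfl
  -- `B` lies on a cycle of `parent`; the only cycle is the fixed point `root`.
  have hper : IsPeriodicPt T.parent (m + n) B := by
    rwa [IsPeriodicPt, IsFixedPt, iterate_add_apply]
  obtain ⟨N, hN⟩ := T.reaches_root B
  have hB : B = T.root :=
    calc B = T.parent^[(m + n) * N] B := (hper.mul_const N).eq.symm
      _ = T.parent^[(m + n) * N - N] (T.parent^[N] B) := by
        rw [← iterate_add_apply, Nat.sub_add_cancel (Nat.le_mul_of_pos_left N (by omega))]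
      _ = T.root := by rw [hN, iterate_parent_root]
  subst hB
  exact T.iterate_parent_root n

theorem isAnc_of_mem_fC {x : V} {A B : MaxClique G} (hA : x ∈ fC T A) (hB : x ∈ B.1) :
    IsAnc T A B := by
  rw [mem_fC_iff] at hA
  let S : Set {C : MaxClique G // x ∈ C.1} := {C | IsAnc T A C.1}
  suffices hS : ∀ u v, (SimpleGraph.fromRel fun C C' : MaxClique G => T.parent C = C').induce
      {C | x ∈ C.1} |>.Adj u v → u ∈ S → v ∈ S from
    ((T.vertex_subtree x).preconnected ⟨A, hA.1⟩ ⟨B, hB⟩).mem_of_adj_mem hS ⟨0, rfl⟩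
  rintro u v hadj ⟨n, hn⟩
  obtain ⟨huv, hparent | hparent⟩ : u.1 ≠ v.1 ∧ (T.parent u.1 = v.1 ∨ T.parent v.1 = u.1) := hadj
  · cases n with
    | zero =>
      obtain rfl : u.1 = A := hn
      rcases hA.2 with hroot | hnot
      · exact absurd (by rw [← hparent, hroot, T.parent_root]) huv
      · exact absurd (hparent ▸ v.2) hnot
    | succ n =>
      exact ⟨n, by rwa [iterate_succ_apply, hparent] at hn⟩
  · exact ⟨n + 1, by rw [iterate_succ_apply, hparent, hn]⟩

theorem eq_of_mem_fC {x : V} {C C' : MaxClique G} (h : x ∈ fC T C) (h' : x ∈ fC T C') :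
    C = C' :=
  isAnc_antisymm (isAnc_of_mem_fC h (mem_fC_iff.1 h').1) (isAnc_of_mem_fC h' (mem_fC_iff.1 h).1)

theorem exists_mem_fC (x : V) : ∃ C : MaxClique G, x ∈ fC T C := by
  classical
  obtain ⟨C, hC⟩ := G.exists_maxClique_mem x
  have hstop : ∃ k, T.parent^[k] C = T.root ∨ x ∉ (T.parent^[k + 1] C).1 :=
    ⟨_, Or.inl (T.reaches_root C).choose_spec⟩
  have hmem : x ∈ (T.parent^[Nat.find hstop] C).1 := by
    rcases h : Nat.find hstop with _ | k
    · exact hC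
    · have := Nat.find_min hstop (h ▸ k.lt_succ_self : k < Nat.find hstop)
      exact not_not.1 (not_or.1 this).2
  refine ⟨_, mem_fC_iff.2 ⟨hmem, ?_⟩⟩
  rw [← iterate_succ_apply' T.parent]
  exact Nat.find_spec hstop

theorem fC_nonempty [Nonempty V] (C : MaxClique G) : (fC T C).Nonempty := by
  unfold fC
  split_ifs with hroot
  · exact C.nonempty
  · refine Set.sdiff_nonempty.2 fun hsub => hroot (T.eq_root_of_parent_eq ?_)
    exact Subtype.ext (C.2.2 _ (T.parent C).2.1 hsub).symm

end CliqueTree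

theorem stmt1_general {V : Type*} [Nonempty V] (G : SimpleGraph V)
    (T : CliqueTree G) :
    (∀ C : MaxClique G, (fC T C).Nonempty) ∧
    (⋃ C : MaxClique G, fC T C) = Set.univ ∧
    (∀ C C' : MaxClique G, C ≠ C' → Disjoint (fC T C) (fC T C')) ∧
    (∀ x : V, ∃! C : MaxClique G, x ∈ fC T C) :=
  ⟨T.fC_nonempty,
    Set.eq_univ_of_forall fun x => Set.mem_iUnion.2 (T.exists_mem_fC x),
    fun _ _ hne => Set.disjoint_left.2 fun _ hx hx' => hne (T.eq_of_mem_fC hx hx'),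
    fun x => (T.exists_mem_fC x).elim fun C hC => ⟨C, hC, fun _ hC' => T.eq_of_mem_fC hC' hC⟩⟩

/-- The family `{f(C) : C node of the clique tree}` is a partition of `V_G` into
nonempty sets; in particular every vertex lies in `f(C)` for exactly one node `C`. -/
theorem stmt1 {V : Type*} [Fintype V] [Nonempty V] (G : SimpleGraph V)
    (T : CliqueTree G) :
    (∀ C : MaxClique G, (fC T C).Nonempty) ∧
    (⋃ C : MaxClique G, fC T C) = Set.univ ∧
    (∀ C C' : MaxClique G, C ≠ C' → Disjoint (fC T C) (fC T C')) ∧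
    (∀ x : V, ∃! C : MaxClique G, x ∈ fC T C) :=
  stmt1_general G T
end

section
/- Let T be a clique tree of a finite simple graph G, rooted at a node C_r. For each node C of T and each vertex x ∈ V_G ∖ V(C), either x is adjacent in G to every vertex of f(C), or x is adjacent in G to no vertex of f(C). -/
variable {V : Type*}

variable {G : SimpleGraph V}

/-!
If `x ∈ C`, then `x` is adjacent to all of `f(C) ⊆ C`, as `x ∉ V(C) ⊇ f(C)`. If `x ∉ C` and
`x` is adjacent to some `y ∈ f(C)`, take a maximal clique `M ⊇ {x, y}`. The nodes containing `y`
form a subtree whose top node is `C`, so `M` is a descendant of `C`. Walking from `M` up to `C`,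
`x` can never leave the current node, since it would then lie in `f(D)` for some descendant `D`
of `C`, i.e. in `V(C)`. Hence `x ∈ C`, a contradiction.
-/

lemma exists_isMaxClique_superset {S : Set V} (hS : G.IsClique S) :
    ∃ M, IsMaxClique G M ∧ S ⊆ M := by
  obtain ⟨M, hSM, hM⟩ := zorn_subset_nonempty {s | G.IsClique s}
    (fun c hc hchain _ => ⟨⋃₀ c, (SimpleGraph.isClique_sUnion hchain.directedOn).2 hc,
      fun _ => Set.subset_sUnion_of_mem⟩) S hS
  obtain ⟨hMcl, hMmax⟩ := SimpleGraph.isMaximalClique_iff.1 hM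
  exact ⟨M, ⟨hMcl, fun D hD hMD => (hMmax D hD hMD).antisymm' hMD⟩, hSM⟩

namespace CliqueTree

variable (T : CliqueTree G)

lemma fC_subset (C : MaxClique G) : fC T C ⊆ C.1 := by
  unfold fC
  split_ifs
  exacts [subset_rfl, Set.sdiff_subset]

lemma isAnc_refl (C : MaxClique G) : IsAnc T C C := ⟨0, rfl⟩

lemma fC_subset_Vsub {C D : MaxClique G} (h : IsAnc T C D) : fC T D ⊆ Vsub T C :=
  Set.subset_biUnion_of_mem (u := fC T) h

lemma notMem_parent_of_mem_fC {C : MaxClique G} (hC : C ≠ T.root) {y : V}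
    (hy : y ∈ fC T C) : y ∉ (T.parent C).1 := by
  simp only [fC, if_neg hC] at hy
  exact hy.2

/-- Inside the subtree of a vertex `y ∉ Pa(C)`, the descendants of `C` are closed under
adjacency: the only edge leaving them is the one from `C` to `Pa(C)`. -/
lemma isAnc_of_adj {C A B : MaxClique G} {y : V} (hy : y ∉ (T.parent C).1) (hyB : y ∈ B.1)
    (hAB : (SimpleGraph.fromRel fun A B : MaxClique G => T.parent A = B).Adj A B)
    (hA : IsAnc T C A) : IsAnc T C B := by
  obtain ⟨n, hn⟩ := hA
  rcases (SimpleGraph.fromRel_adj _ _ _).1 hAB |>.2 with hAB | hBA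
  · subst hAB
    cases n with
    | zero => exact absurd (hn ▸ hyB) hy
    | succ k => exact ⟨k, by rwa [← Function.iterate_succ_apply]⟩
  · exact ⟨n + 1, by rw [Function.iterate_succ_apply, hBA, hn]⟩

lemma isAnc_of_mem_fC_s2 {C M : MaxClique G} {y : V} (hy : y ∈ fC T C) (hyM : y ∈ M.1) :
    IsAnc T C M := by
  by_cases hroot : C = T.root
  · exact hroot ▸ T.reaches_root M
  obtain ⟨w⟩ := T.vertex_subtree y ⟨C, fC_subset T C hy⟩ ⟨M, hyM⟩
  suffices ∀ {u v : {D : MaxClique G | y ∈ D.1}}, (SimpleGraph.fromRel _).induce _ |>.Walk u v →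
      IsAnc T C u.1 → IsAnc T C v.1 from this w (isAnc_refl T C)
  intro u v w
  induction w with
  | nil => exact id
  | @cons _ b _ h _ ih =>
    exact fun hu => ih (T.isAnc_of_adj (T.notMem_parent_of_mem_fC hroot hy) b.2 h hu)

lemma mem_parent_of_notMem_Vsub {C D : MaxClique G} {x : V} (hx : x ∉ Vsub T C)
    (hD : IsAnc T C D) (hxD : x ∈ D.1) : x ∈ (T.parent D).1 := by
  by_cases hroot : D = T.root
  · rwa [hroot, T.parent_root, ← hroot]
  by_contra hxP
  have hxf : x ∈ fC T D := by
    simp only [fC, if_neg hroot]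
    exact ⟨hxD, hxP⟩
  exact hx (T.fC_subset_Vsub hD hxf)

lemma mem_of_isAnc_of_notMem_Vsub {C : MaxClique G} {x : V} (hx : x ∉ Vsub T C) :
    ∀ {M : MaxClique G}, IsAnc T C M → x ∈ M.1 → x ∈ C.1 := by
  rintro M ⟨n, hn⟩ hxM
  induction n generalizing M with
  | zero => exact hn ▸ hxM
  | succ n ih =>
    exact ih (M := T.parent M) hn (T.mem_parent_of_notMem_Vsub hx ⟨n + 1, hn⟩ hxM)

end CliqueTree

theorem stmt2_general {V : Type*} (G : SimpleGraph V) (T : CliqueTree G)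
    (C : MaxClique G) (x : V) (hx : x ∉ Vsub T C) :
    (∀ y ∈ fC T C, G.Adj x y) ∨ (∀ y ∈ fC T C, ¬ G.Adj x y) := by
  by_cases hxC : x ∈ C.1
  · left
    intro y hy
    have hxy : x ≠ y := fun h => hx (h ▸ T.fC_subset_Vsub (T.isAnc_refl C) hy)
    exact C.2.1 hxC (T.fC_subset C hy) hxy
  · right
    intro y hy hxy
    obtain ⟨M, hM, hxyM⟩ := exists_isMaxClique_superset (SimpleGraph.isClique_pair.2 fun _ => hxy)
    have hMC : IsAnc T C ⟨M, hM⟩ := T.isAnc_of_mem_fC_s2 hy (hxyM (by simp))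
    exact hxC (T.mem_of_isAnc_of_notMem_Vsub hx hMC (hxyM (by simp)))

/-- For each node `C` of the clique tree and each `x ∈ V_G ∖ V(C)`, either `x` is
adjacent to every vertex of `f(C)`, or to none. -/
theorem stmt2 {V : Type*} [Fintype V] (G : SimpleGraph V) (T : CliqueTree G)
    (C : MaxClique G) (x : V) (hx : x ∉ Vsub T C) :
    (∀ y ∈ fC T C, G.Adj x y) ∨ (∀ y ∈ fC T C, ¬ G.Adj x y) :=
  stmt2_general G T C x hx
end

section
/- Let T be a clique tree of a finite simple graph G, rooted at a node C_r. For any two incomparable nodes C and C' of T, there is no edge of G between a vertex of f(C) and a vertex of f(C'). -/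
variable {V : Type*}

variable {G : SimpleGraph V}

/-! If `x ∈ f(C)` and `y ∈ f(C')` were adjacent, the edge `xy` would lie in a maximal clique `D`.
Since `x ∉ Pa(C)`, the subtree of nodes containing `x` can only leave the descendants of `C`
through the edge `C – Pa(C)`, so `D ⪯ C`; likewise `D ⪯ C'`. But two ancestors of the same node
are comparable. -/

lemma exists_maxClique_superset {s : Set V}
    (hs : G.IsClique s) : ∃ D : MaxClique G, s ⊆ D.1 := by
  obtain ⟨M, hM, hsM⟩ := (G.isClique_iff_isChain_adj.1 hs).exists_maxChain
  refine ⟨⟨M, G.isClique_iff_isChain_adj.2 hM.1, fun D hD hMD => ?_⟩, hsM⟩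
  exact hM.2 (G.isClique_iff_isChain_adj.1 hD) hMD

section

variable {T : CliqueTree G} {A B C D : MaxClique G}

lemma IsAnc.refl (T : CliqueTree G) (C : MaxClique G) : IsAnc T C C := ⟨0, rfl⟩

lemma IsAnc.root (T : CliqueTree G) (C : MaxClique G) : IsAnc T T.root C := T.reaches_root C

lemma IsAnc.of_parent (h : IsAnc T C (T.parent A)) : IsAnc T C A := by
  obtain ⟨n, hn⟩ := h
  exact ⟨n + 1, by rwa [Function.iterate_succ_apply]⟩

lemma IsAnc.parent (h : IsAnc T C A) (hne : A ≠ C) : IsAnc T C (T.parent A) := by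
  obtain ⟨_ | n, hn⟩ := h
  · exact absurd hn hne
  · exact ⟨n, by rwa [Function.iterate_succ_apply] at hn⟩

lemma IsAnc.total_of_isAnc (hA : IsAnc T A D) (hB : IsAnc T B D) :
    IsAnc T A B ∨ IsAnc T B A := by
  obtain ⟨n, rfl⟩ := hA
  obtain ⟨m, rfl⟩ := hB
  rcases le_total n m with h | h
  · exact Or.inr ⟨m - n, by rw [← Function.iterate_add_apply, Nat.sub_add_cancel h]⟩
  · exact Or.inl ⟨n - m, by rw [← Function.iterate_add_apply, Nat.sub_add_cancel h]⟩

lemma CliqueTree.isAnc_of_mem_of_not_mem_parent {x : V} (hxC : x ∈ C.1)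
    (hxP : x ∉ (T.parent C).1) (hxD : x ∈ D.1) : IsAnc T C D := by
  have hreach := (SimpleGraph.reachable_iff_reflTransGen _ _).1
    ((T.vertex_subtree x).preconnected ⟨C, hxC⟩ ⟨D, hxD⟩)
  change IsAnc T C (Subtype.val (⟨D, hxD⟩ : {A : MaxClique G | x ∈ A.1}))
  generalize (⟨D, hxD⟩ : {A : MaxClique G | x ∈ A.1}) = u at hreach ⊢
  induction hreach with
  | refl => exact IsAnc.refl T C
  | @tail u w _ huw ih =>
    obtain ⟨-, huw⟩ := huw
    simp only [Function.Embedding.coe_subtype] at huw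
    rcases huw with huw | hwu
    · by_cases huC : u.1 = C
      · exact absurd (huC ▸ huw ▸ w.2 : x ∈ (T.parent C).1) hxP
      · exact huw ▸ ih.parent huC
    · exact IsAnc.of_parent (hwu ▸ ih)

lemma CliqueTree.ne_root_of_not_isAnc (h : ¬ IsAnc T C D) : C ≠ T.root :=
  fun hC => h (hC ▸ IsAnc.root T D)

end

theorem stmt3_general {V : Type*} (G : SimpleGraph V) (T : CliqueTree G)
    (C C' : MaxClique G) (h1 : ¬ IsAnc T C C') (h2 : ¬ IsAnc T C' C) :
    ∀ x ∈ fC T C, ∀ y ∈ fC T C', ¬ G.Adj x y := by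
  intro x hx y hy hxy
  rw [fC, if_neg (CliqueTree.ne_root_of_not_isAnc h1)] at hx
  rw [fC, if_neg (CliqueTree.ne_root_of_not_isAnc h2)] at hy
  obtain ⟨D, hD⟩ := exists_maxClique_superset (G.isClique_pair.2 fun _ => hxy)
  have hCD := T.isAnc_of_mem_of_not_mem_parent hx.1 hx.2 (hD (Set.mem_insert x {y}))
  have hC'D := T.isAnc_of_mem_of_not_mem_parent hy.1 hy.2 (hD (Set.mem_insert_of_mem x rfl))
  rcases hCD.total_of_isAnc hC'D with h | h
  exacts [h1 h, h2 h]

/-- For incomparable nodes `C`, `C'` of the clique tree there is no edge between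
`f(C)` and `f(C')`. -/
theorem stmt3 {V : Type*} [Fintype V] (G : SimpleGraph V) (T : CliqueTree G)
    (C C' : MaxClique G) (h1 : ¬ IsAnc T C C') (h2 : ¬ IsAnc T C' C) :
    ∀ x ∈ fC T C, ∀ y ∈ fC T C', ¬ G.Adj x y :=
  stmt3_general G T C C' h1 h2
end

section
/- Let T be a clique tree of a finite simple graph G, rooted at a node C_r. Let C be a node of T, let x ∈ f(C), and let z ∈ N[x] with z ∉ V(C). Then z ∈ C; consequently z is adjacent in G to every vertex of C other than z itself. -/
variable {V : Type*}

variable {G : SimpleGraph V}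

lemma fC_subset (T : CliqueTree G) (A : MaxClique G) : fC T A ⊆ A.1 := by
  by_cases h : A = T.root <;> simp [fC, h, Set.diff_subset]

/-- Every vertex of a node appears in `f` of some ancestor of that node. -/
lemma exists_fC (T : CliqueTree G) :
    ∀ (N : ℕ) (D : MaxClique G), T.parent^[N] D = T.root →
      ∀ y ∈ D.1, ∃ n, y ∈ fC T (T.parent^[n] D) := by
  intro N
  induction N with
  | zero =>
    intro D hD y hy
    simp only [Function.iterate_zero, id_eq] at hD
    exact ⟨0, by simp only [Function.iterate_zero, id_eq]; rw [fC, if_pos hD]; exact hy⟩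
  | succ N ih =>
    intro D hD y hy
    by_cases hroot : D = T.root
    · exact ⟨0, by simp only [Function.iterate_zero, id_eq]; rw [fC, if_pos hroot]; exact hy⟩
    · by_cases hpy : y ∈ (T.parent D).1
      · obtain ⟨n, hn⟩ := ih (T.parent D)
          (by rw [← Function.iterate_succ_apply]; exact hD) y hpy
        exact ⟨n + 1, by rwa [Function.iterate_succ_apply]⟩
      · exact ⟨0, by
          simp only [Function.iterate_zero, id_eq]
          rw [fC, if_neg hroot]
          exact ⟨hy, hpy⟩⟩

/-- Along a walk in the subtree of nodes containing `x`, starting at a descendant of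
the node `C` where `x` first appears, we stay among descendants of `C`. -/
lemma walk_desc (T : CliqueTree G) (C : MaxClique G) (x : V) (hx : x ∈ fC T C)
    {u v : ↥{E : MaxClique G | x ∈ E.1}}
    (w : ((SimpleGraph.fromRel fun A B : MaxClique G => T.parent A = B).induce
      {E : MaxClique G | x ∈ E.1}).Walk u v) :
    IsAnc T C u.1 → IsAnc T C v.1 := by
  induction w with
  | nil => exact id
  | @cons a b c h p ih =>
    intro ha
    apply ih
    have h' : (SimpleGraph.fromRel fun A B : MaxClique G => T.parent A = B).Adj a.1 b.1 := h
    obtain ⟨hne, hrel⟩ := (SimpleGraph.fromRel_adj _ _ _).mp h'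
    obtain ⟨k, hk⟩ := ha
    rcases hrel with hpar | hpar
    · -- parent a = b
      rcases k with _ | k
      · -- a = C
        simp only [Function.iterate_zero, id_eq] at hk
        by_cases hroot : C = T.root
        · have hpa : T.parent a.1 = a.1 := by rw [hk, hroot]; exact T.parent_root
          exact absurd (by rw [← hpar, hpa] : a.1 = b.1) hne
        · -- x ∉ parent C = b, but x ∈ b
          have hxb : x ∈ b.1.1 := b.2
          rw [fC, if_neg hroot] at hx
          exact absurd (show x ∈ (T.parent C).1 by rw [← hk, hpar]; exact hxb) hx.2
      · exact ⟨k, by rw [← hpar, ← Function.iterate_succ_apply]; exact hk⟩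
    · -- parent b = a
      exact ⟨k + 1, by rw [Function.iterate_succ_apply, hpar]; exact hk⟩

/-- If a walk in the subtree of nodes containing `z` goes from a descendant of `C` to a
non-descendant of `C`, it passes through `C`, hence `z ∈ C`. -/
lemma mem_of_walk (T : CliqueTree G) (C : MaxClique G) (z : V)
    {u v : ↥{E : MaxClique G | z ∈ E.1}}
    (w : ((SimpleGraph.fromRel fun A B : MaxClique G => T.parent A = B).induce
      {E : MaxClique G | z ∈ E.1}).Walk u v) :
    ¬ IsAnc T C v.1 → IsAnc T C u.1 → z ∈ C.1 := by
  induction w with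
  | nil => exact fun hv hu => absurd hu hv
  | @cons a b c h p ih =>
    intro hv ha
    by_cases hac : a.1 = C
    · exact hac ▸ a.2
    by_cases hbc : b.1 = C
    · exact hbc ▸ b.2
    apply ih hv
    have h' : (SimpleGraph.fromRel fun A B : MaxClique G => T.parent A = B).Adj a.1 b.1 := h
    obtain ⟨hne, hrel⟩ := (SimpleGraph.fromRel_adj _ _ _).mp h'
    obtain ⟨k, hk⟩ := ha
    rcases hrel with hpar | hpar
    · -- parent a = b
      rcases k with _ | k
      · exact absurd hk hac
      · exact ⟨k, by rw [← hpar, ← Function.iterate_succ_apply]; exact hk⟩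
    · -- parent b = a
      exact ⟨k + 1, by rw [Function.iterate_succ_apply, hpar]; exact hk⟩

/-- Any clique extends to a maximal clique. -/
lemma exists_maxclique (G : SimpleGraph V) {S : Set V} (hS : G.IsClique S) :
    ∃ D : Set V, IsMaxClique G D ∧ S ⊆ D := by
  obtain ⟨m, hSm, hmS, hmax⟩ := zorn_subset_nonempty {E : Set V | G.IsClique E}
    (fun c hc hchain _ => by
      refine ⟨⋃₀ c, ?_, fun s hs => Set.subset_sUnion_of_mem hs⟩
      intro a ha b hb hab
      obtain ⟨s, hs, has⟩ := ha
      obtain ⟨t, ht, hbt⟩ := hb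
      rcases hchain.total hs ht with hst | hts
      · exact hc ht (hst has) hbt hab
      · exact hc hs has (hts hbt) hab) S hS
  exact ⟨m, ⟨hmS, fun E hE hmE => Set.Subset.antisymm hmE (hmax hE hmE)⟩, hSm⟩

/-- If `x ∈ f(C)` and `z ∈ N[x]` with `z ∉ V(C)`, then `z ∈ C`; consequently `z` is
adjacent to every vertex of `C` other than `z` itself. -/
theorem stmt5 {V : Type*} [Fintype V] (G : SimpleGraph V) (T : CliqueTree G)
    (C : MaxClique G) (x z : V) (hx : x ∈ fC T C) (hz : z ∈ closedNbhd G x)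
    (hzV : z ∉ Vsub T C) :
    z ∈ C.1 ∧ ∀ w ∈ C.1, w ≠ z → G.Adj z w := by
  have hxV : x ∈ Vsub T C := Set.mem_biUnion (show IsAnc T C C from ⟨0, rfl⟩) hx
  have hzx : z ≠ x := fun h => hzV (h ▸ hxV)
  have hadj : G.Adj x z := by
    rcases Set.mem_insert_iff.mp hz with h | h
    · exact absurd h hzx
    · exact h
  obtain ⟨Dset, hDmax, hsubD⟩ := exists_maxclique G (SimpleGraph.isClique_pair.mpr fun _ => hadj)
  have hxD : x ∈ Dset := hsubD (Set.mem_insert _ _)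
  have hzD : z ∈ Dset := hsubD (Set.mem_insert_of_mem _ rfl)
  set D : MaxClique G := ⟨Dset, hDmax⟩ with hD
  have hCD : IsAnc T C D := by
    obtain ⟨w⟩ := (T.vertex_subtree x).preconnected ⟨C, fC_subset T C hx⟩ ⟨D, hxD⟩
    exact walk_desc T C x hx w ⟨0, rfl⟩
  obtain ⟨N, hN⟩ := T.reaches_root D
  obtain ⟨n, hn⟩ := exists_fC T N D hN z hzD
  set A : MaxClique G := T.parent^[n] D with hA
  have hzA : z ∈ A.1 := fC_subset T A hn
  have hAnd : ¬ IsAnc T C A := fun hAnc => hzV (Set.mem_biUnion hAnc hn)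
  have hzC : z ∈ C.1 := by
    obtain ⟨w⟩ := (T.vertex_subtree z).preconnected ⟨D, hzD⟩ ⟨A, hzA⟩
    exact mem_of_walk T C z w hAnd hCD
  exact ⟨hzC, fun w hw hne => C.2.1 hzC hw hne.symm⟩
end

section
/- Let G be a finite simple graph and let A ⊆ V_G. Then G has a minimal dominating set containing A if and only if Split(G) has a minimal dominating set D such that A ⊆ D and D ∩ (V_G' ∖ A') = ∅, where A' := {y' ∈ V_G' : N_G[y] ∩ A ≠ ∅} (equivalently, A' = N_{Split(G)}[A] ∩ V_G'). -/
variable {V : Type*}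

/-- `Split(G)`: the split graph on `V_G ⊔ V_G'` where `V_G` is a clique, `V_G'` an
independent set, and `x ∈ V_G` is adjacent to the copy `y'` of `y` iff `x ∈ N_G[y]`. -/
def SplitG (G : SimpleGraph V) : SimpleGraph (V ⊕ V) :=
  SimpleGraph.fromRel fun a b =>
    match a, b with
    | Sum.inl _, Sum.inl _ => True
    | Sum.inl x, Sum.inr y => x = y ∨ G.Adj x y
    | _, _ => False


/-!
A set `X ⊆ V_G` dominates `Split(G)` iff it dominates `G`: any nonempty `X` dominates the clique
`V_G`, and `y'` is dominated by `X` iff `N_G[y]` meets `X`. So minimal dominating sets of `G` stay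
minimal in `Split(G)`. Conversely, for a minimal dominating set `D` of `Split(G)`, the part
`D ∩ V_G` dominates `G` once every `y' ∈ D` has `N_G[y] ∩ A ≠ ∅` with `A ⊆ D`; and it is minimal,
since a dominating `X ⊂ D ∩ V_G` would make `D ∖ ((D ∩ V_G) ∖ X) ⊇ X` a smaller dominating set
of `Split(G)`.
-/

open Set

section

variable {G : SimpleGraph V}

lemma mem_closedNbhd_iff {x y : V} : y ∈ closedNbhd G x ↔ y = x ∨ G.Adj x y := Iff.rfl

lemma mem_closedNbhd_comm {x y : V} : y ∈ closedNbhd G x ↔ x ∈ closedNbhd G y := by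
  simp only [mem_closedNbhd_iff, G.adj_comm, eq_comm]

lemma isDomSet_iff {D : Set V} : IsDomSet G D ↔ ∀ v, ∃ d ∈ D, v ∈ closedNbhd G d := by
  simp only [IsDomSet, closedNbhdSet, eq_univ_iff_forall, mem_iUnion₂, exists_prop]

lemma IsDomSet.mono {D D' : Set V} (hD : IsDomSet G D) (h : D ⊆ D') : IsDomSet G D' :=
  isDomSet_iff.2 fun v => (isDomSet_iff.1 hD v).imp fun _ hd => ⟨h hd.1, hd.2⟩

lemma inl_mem_closedNbhd_splitG_inl (x d : V) :
    Sum.inl x ∈ closedNbhd (SplitG G) (Sum.inl d) := by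
  by_cases h : x = d
  · exact Or.inl (congrArg Sum.inl h)
  · exact Or.inr (by simp [SplitG, SimpleGraph.fromRel_adj, Ne.symm h])

lemma inr_mem_closedNbhd_splitG_inl {x y : V} :
    Sum.inr y ∈ closedNbhd (SplitG G) (Sum.inl x) ↔ x ∈ closedNbhd G y := by
  rw [mem_closedNbhd_comm (x := y), mem_closedNbhd_iff, mem_closedNbhd_iff]
  simp [SplitG, SimpleGraph.fromRel_adj, eq_comm]

lemma inr_mem_closedNbhd_splitG_inr {y z : V} :
    Sum.inr y ∈ closedNbhd (SplitG G) (Sum.inr z) ↔ y = z := by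
  simp [mem_closedNbhd_iff, SplitG, SimpleGraph.fromRel_adj]

lemma isDomSet_splitG_image_inl_iff {X : Set V} :
    IsDomSet (SplitG G) (Sum.inl '' X) ↔ IsDomSet G X := by
  simp only [isDomSet_iff, Sum.forall, exists_mem_image, inr_mem_closedNbhd_splitG_inl]
  constructor
  · exact fun h y => (h.2 y).imp fun x hx => ⟨hx.1, mem_closedNbhd_comm.1 hx.2⟩
  · refine fun h => ⟨fun x => ?_, fun y => ?_⟩
    · obtain ⟨d, hd, -⟩ := h x
      exact ⟨d, hd, inl_mem_closedNbhd_splitG_inl x d⟩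
    · exact (h y).imp fun d hd => ⟨hd.1, mem_closedNbhd_comm.1 hd.2⟩

lemma IsMinDomSet.splitG_image_inl {X : Set V} (hX : IsMinDomSet G X) :
    IsMinDomSet (SplitG G) (Sum.inl '' X) := by
  refine ⟨isDomSet_splitG_image_inl_iff.2 hX.1, fun D hDX hD => hX.2 (Sum.inl ⁻¹' D) ?_ ?_⟩
  · refine ⟨fun x hx => Sum.inl_injective.mem_set_image.1 (hDX.1 hx), fun hXD => hDX.2 ?_⟩
    rintro _ ⟨x, hx, rfl⟩
    exact hXD hx
  · refine isDomSet_splitG_image_inl_iff.1 (hD.mono ?_)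
    exact (image_preimage_eq_of_subset (hDX.1.trans (image_subset_range _ _))).ge

lemma isDomSet_preimage_inl_of_splitG {D : Set (V ⊕ V)} {A : Set V}
    (hD : IsDomSet (SplitG G) D) (hAD : Sum.inl '' A ⊆ D)
    (hinr : ∀ y, Sum.inr y ∈ D → (closedNbhd G y ∩ A).Nonempty) :
    IsDomSet G (Sum.inl ⁻¹' D) := by
  refine isDomSet_iff.2 fun y => ?_
  obtain ⟨d | z, hd, hyd⟩ := isDomSet_iff.1 hD (Sum.inr y)
  · exact ⟨d, hd, mem_closedNbhd_comm.1 (inr_mem_closedNbhd_splitG_inl.1 hyd)⟩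
  · obtain rfl := inr_mem_closedNbhd_splitG_inr.1 hyd
    obtain ⟨a, hya, ha⟩ := hinr y hd
    exact ⟨a, hAD (mem_image_of_mem _ ha), mem_closedNbhd_comm.1 hya⟩

lemma IsMinDomSet.not_isDomSet_of_ssubset_preimage_inl {D : Set (V ⊕ V)}
    (hD : IsMinDomSet (SplitG G) D) {X : Set V} (hX : X ⊂ Sum.inl ⁻¹' D) :
    ¬ IsDomSet G X := by
  intro hXdom
  obtain ⟨x, hxD, hxX⟩ := exists_of_ssubset hX
  refine hD.2 (D \ Sum.inl '' (Sum.inl ⁻¹' D \ X)) ?_ ?_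
  · exact sdiff_ssubset_left_iff.2 ⟨Sum.inl x, hxD, mem_image_of_mem _ ⟨hxD, hxX⟩⟩
  · refine (isDomSet_splitG_image_inl_iff.2 hXdom).mono ?_
    rintro _ ⟨x, hx, rfl⟩
    exact ⟨hX.1 hx, fun ⟨x', hx', hxx'⟩ => hx'.2 (Sum.inl_injective hxx' ▸ hx)⟩

end

theorem stmt7_general {V : Type*} (G : SimpleGraph V) (A : Set V) :
    (∃ D : Set V, IsMinDomSet G D ∧ A ⊆ D) ↔
    (∃ D : Set (V ⊕ V), IsMinDomSet (SplitG G) D ∧ (Sum.inl '' A) ⊆ D ∧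
      D ∩ (Set.range Sum.inr \
        {v : V ⊕ V | ∃ y : V, v = Sum.inr y ∧ (closedNbhd G y ∩ A).Nonempty}) = ∅) := by
  constructor
  · rintro ⟨X, hX, hAX⟩
    refine ⟨Sum.inl '' X, hX.splitG_image_inl, image_mono hAX, eq_empty_of_forall_notMem ?_⟩
    rintro _ ⟨⟨x, -, rfl⟩, ⟨y, hy⟩, -⟩
    exact Sum.inr_ne_inl hy
  · rintro ⟨D, hD, hAD, hempty⟩
    have hinr : ∀ y, Sum.inr y ∈ D → (closedNbhd G y ∩ A).Nonempty := by
      intro y hy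
      by_contra hA
      exact (eq_empty_iff_forall_notMem.1 hempty) (Sum.inr y)
        ⟨hy, mem_range_self y, fun ⟨z, hyz, hz⟩ => hA (Sum.inr_injective hyz ▸ hz)⟩
    refine ⟨Sum.inl ⁻¹' D, ⟨isDomSet_preimage_inl_of_splitG hD.1 hAD hinr, fun X hX => ?_⟩,
      fun a ha => hAD (mem_image_of_mem _ ha)⟩
    exact hD.not_isDomSet_of_ssubset_preimage_inl hX

/-- `G` has a minimal dominating set containing `A` iff `Split(G)` has a minimal
dominating set `D` with `A ⊆ D` and `D ∩ (V_G' ∖ A') = ∅`, where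
`A' = {y' : N_G[y] ∩ A ≠ ∅}`. -/
theorem stmt7 {V : Type*} [Fintype V] (G : SimpleGraph V) (A : Set V) :
    (∃ D : Set V, IsMinDomSet G D ∧ A ⊆ D) ↔
    (∃ D : Set (V ⊕ V), IsMinDomSet (SplitG G) D ∧ (Sum.inl '' A) ⊆ D ∧
      D ∩ (Set.range Sum.inr \
        {v : V ⊕ V | ∃ y : V, v = Sum.inr y ∧ (closedNbhd G y ∩ A).Nonempty}) = ∅) :=
  stmt7_general G A
end
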